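/- Let f_n(x) = (1 - α_n log x)^{-1} for x ∈ (0,1], where α_n → 0 with α_n > 0. Then ∫_0^1 f_n(x) dx = 1 - α_n + O(α_n²) as n → ∞. -/

import Mathlib

/-!
Write `t = α log x ≤ 0`. Then `1 / (1 - t) = 1 + t + t² / (1 - t)` with `0 ≤ t² / (1 - t) ≤ t²`,
so the integral differs from `∫₀¹ (1 + α log x) dx = 1 - α` by at most `α² ∫₀¹ (log x)² dx = 2 α²`.
The moments `∫₀¹ (log x)ᵏ dx = (-1)ᵏ k!` come from the substitution `x = e⁻ᵘ`, which turns them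
into Gamma integrals.
-/

open MeasureTheory Filter Real Set

theorem image_exp_neg_Ioi_zero : (fun u : ℝ => exp (-u)) '' Ioi 0 = Ioo 0 1 := by
  ext x
  constructor
  · rintro ⟨u, hu, rfl⟩
    exact ⟨exp_pos _, exp_lt_one_iff.mpr (neg_neg_of_pos hu)⟩
  · rintro ⟨hx0, hx1⟩
    exact ⟨-log x, neg_pos.mpr (log_neg hx0 hx1), by simp [exp_log hx0]⟩

section SubstitutionExpNeg

variable {E : Type*} [NormedAddCommGroup E] [NormedSpace ℝ E]

theorem hasDerivWithinAt_exp_neg (u : ℝ) (s : Set ℝ) :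
    HasDerivWithinAt (fun u : ℝ => exp (-u)) (-exp (-u)) s u := by
  simpa using ((hasDerivAt_neg u).exp).hasDerivWithinAt

theorem injOn_exp_neg (s : Set ℝ) : InjOn (fun u : ℝ => exp (-u)) s :=
  fun _ _ _ _ h => neg_injective (exp_injective h)

theorem integrableOn_comp_log_Ioo_iff (g : ℝ → E) :
    IntegrableOn (fun x => g (log x)) (Ioo 0 1) ↔
      IntegrableOn (fun u => exp (-u) • g (-u)) (Ioi 0) := by
  rw [← image_exp_neg_Ioi_zero, integrableOn_image_iff_integrableOn_abs_deriv_smul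
    measurableSet_Ioi (fun u _ => hasDerivWithinAt_exp_neg u _) (injOn_exp_neg _)]
  simp [abs_of_pos (exp_pos _)]

theorem integral_comp_log_Ioo (g : ℝ → E) :
    ∫ x in Ioo 0 1, g (log x) = ∫ u in Ioi 0, exp (-u) • g (-u) := by
  rw [← image_exp_neg_Ioi_zero, integral_image_eq_integral_abs_deriv_smul
    measurableSet_Ioi (fun u _ => hasDerivWithinAt_exp_neg u _) (injOn_exp_neg _)]
  simp [abs_of_pos (exp_pos _)]

end SubstitutionExpNeg

theorem exp_neg_mul_rpow_natCast_add_one_sub_one (k : ℕ) (u : ℝ) :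
    exp (-u) * u ^ ((k + 1 : ℝ) - 1) = exp (-u) * u ^ k := by
  rw [add_sub_cancel_right, rpow_natCast]

theorem integrableOn_exp_neg_mul_pow_Ioi (k : ℕ) :
    IntegrableOn (fun u : ℝ => exp (-u) * u ^ k) (Ioi 0) := by
  simpa only [exp_neg_mul_rpow_natCast_add_one_sub_one] using
    GammaIntegral_convergent (s := k + 1) (by positivity)

theorem integral_exp_neg_mul_pow_Ioi (k : ℕ) :
    ∫ u in Ioi (0 : ℝ), exp (-u) * u ^ k = k.factorial := by
  simpa only [exp_neg_mul_rpow_natCast_add_one_sub_one, Gamma_nat_eq_factorial] using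
    (Gamma_eq_integral (s := k + 1) (by positivity)).symm

theorem exp_neg_smul_neg_pow (k : ℕ) (u : ℝ) :
    exp (-u) • (-u) ^ k = (-1) ^ k * (exp (-u) * u ^ k) := by
  rw [smul_eq_mul, neg_pow]
  ring

theorem integrableOn_log_pow_Ioo (k : ℕ) : IntegrableOn (fun x => log x ^ k) (Ioo 0 1) := by
  rw [integrableOn_comp_log_Ioo_iff (fun t => t ^ k)]
  simp only [exp_neg_smul_neg_pow]
  exact (integrableOn_exp_neg_mul_pow_Ioi k).const_mul _

theorem integral_log_pow_Ioo (k : ℕ) :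
    ∫ x in Ioo 0 1, log x ^ k = (-1) ^ k * k.factorial := by
  rw [integral_comp_log_Ioo (fun t => t ^ k)]
  simp only [exp_neg_smul_neg_pow, integral_const_mul, integral_exp_neg_mul_pow_Ioi]

theorem integrableOn_log_Ioo : IntegrableOn log (Ioo 0 1) := by
  simpa using integrableOn_log_pow_Ioo 1

theorem integral_log_Ioo : ∫ x in Ioo 0 1, log x = -1 := by
  simpa using integral_log_pow_Ioo 1

theorem integral_log_sq_Ioo : ∫ x in Ioo 0 1, log x ^ 2 = 2 := by
  simpa using integral_log_pow_Ioo 2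

theorem abs_inv_one_sub_sub_one_add_le_sq {t : ℝ} (ht : t ≤ 0) :
    |(1 - t)⁻¹ - (1 + t)| ≤ t ^ 2 := by
  have h1 : 1 ≤ 1 - t := by linarith
  have hrem : (1 - t)⁻¹ - (1 + t) = t ^ 2 / (1 - t) := by
    field_simp
    ring
  rw [hrem, abs_of_nonneg (by positivity)]
  exact div_le_self (sq_nonneg t) h1

section LogPerturbation

variable {a : ℝ}

theorem mul_log_nonpos_of_mem_Ioo (ha : 0 ≤ a) {x : ℝ} (hx : x ∈ Ioo (0 : ℝ) 1) :
    a * log x ≤ 0 :=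
  mul_nonpos_of_nonneg_of_nonpos ha (log_nonpos hx.1.le hx.2.le)

theorem integrableOn_inv_one_sub_mul_log_Ioo (ha : 0 ≤ a) :
    IntegrableOn (fun x => (1 - a * log x)⁻¹) (Ioo 0 1) := by
  refine IntegrableOn.of_bound (by simp) (by fun_prop) 1 ?_
  filter_upwards [ae_restrict_mem measurableSet_Ioo] with x hx
  have h1 : 1 ≤ 1 - a * log x := by linarith [mul_log_nonpos_of_mem_Ioo ha hx]
  rw [norm_inv, norm_of_nonneg (by linarith)]
  exact inv_le_one_of_one_le₀ h1

theorem integrableOn_one_add_mul_log_Ioo :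
    IntegrableOn (fun x => 1 + a * log x) (Ioo 0 1) :=
  (integrableOn_const (by simp)).add (integrableOn_log_Ioo.const_mul a)

theorem integral_one_add_mul_log_Ioo : ∫ x in Ioo 0 1, (1 + a * log x) = 1 - a := by
  have hone : IntegrableOn (fun _ => (1 : ℝ)) (Ioo (0 : ℝ) 1) := integrableOn_const (by simp)
  rw [integral_add hone (integrableOn_log_Ioo.const_mul a),
    setIntegral_const, integral_const_mul, integral_log_Ioo, volume_real_Ioo_of_le zero_le_one]
  ring

theorem abs_integral_inv_one_sub_mul_log_sub_le (ha : 0 ≤ a) :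
    |(∫ x in Ioc (0 : ℝ) 1, (1 - a * log x)⁻¹) - (1 - a)| ≤ 2 * a ^ 2 := by
  rw [integral_Ioc_eq_integral_Ioo, ← integral_one_add_mul_log_Ioo,
    ← integral_sub (integrableOn_inv_one_sub_mul_log_Ioo ha) integrableOn_one_add_mul_log_Ioo]
  calc ‖∫ x in Ioo 0 1, ((1 - a * log x)⁻¹ - (1 + a * log x))‖
      ≤ ∫ x in Ioo 0 1, a ^ 2 * log x ^ 2 := by
        refine norm_integral_le_of_norm_le ((integrableOn_log_pow_Ioo 2).const_mul _) ?_
        filter_upwards [ae_restrict_mem measurableSet_Ioo] with x hx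
        simpa [mul_pow] using
          abs_inv_one_sub_sub_one_add_le_sq (mul_log_nonpos_of_mem_Ioo ha hx)
    _ = 2 * a ^ 2 := by rw [integral_const_mul, integral_log_sq_Ioo, mul_comm]

end LogPerturbation

theorem stmt_3_general (α : ℕ → ℝ) (hαpos : ∀ n, 0 < α n) :
    ∃ C : ℝ, ∀ᶠ n in atTop,
      |(∫ x in Set.Ioc (0 : ℝ) 1, (1 - α n * Real.log x)⁻¹) - (1 - α n)| ≤ C * (α n) ^ 2 :=
  ⟨2, Eventually.of_forall fun n => abs_integral_inv_one_sub_mul_log_sub_le (hαpos n).le⟩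

/-- If `α_n > 0` and `α_n → 0`, then `∫_0^1 (1 - α_n log x)^{-1} dx = 1 - α_n + O(α_n²)`. -/
theorem stmt_3 (α : ℕ → ℝ) (hαpos : ∀ n, 0 < α n)
    (hα : Tendsto α atTop (nhds 0)) :
    ∃ C : ℝ, ∀ᶠ n in atTop,
      |(∫ x in Set.Ioc (0 : ℝ) 1, (1 - α n * Real.log x)⁻¹) - (1 - α n)| ≤ C * (α n) ^ 2 :=
  stmt_3_general α hαpos
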